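/- arXiv:2210.11317 — 2 statements merged into one kernel-verified Lean document; each statement's English description precedes it below -/
import Mathlib

section
/- Let H be a real Hilbert space, g ∈ H, α ≥ 0, ψ₁,…,ψ_N ∈ H, and φ₁,…,φ_N ∈ H. Define T Q = g + α Σⱼ ⟨Q, φⱼ⟩ ψⱼ. If α² · ‖K_Ψ‖ · ‖K_Φ‖ ≤ 1, where K_Ψ and K_Φ are the N×N Gram matrices of (ψⱼ) and (φⱼ) and ‖·‖ denotes the operator (spectral) norm, then T is nonexpansive: ‖T Q - T Q'‖ ≤ ‖Q - Q'‖ for all Q, Q' ∈ H. -/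
open RealInnerProductSpace

lemma quad_le_norm_mul {N : ℕ} (M : Matrix (Fin N) (Fin N) ℝ) (c : Fin N → ℝ) :
    ∑ i, ∑ j, c i * M i j * c j ≤
      ‖Matrix.toEuclideanCLM (𝕜 := ℝ) M‖ * ∑ i, c i ^ 2 := by
  set x : EuclideanSpace ℝ (Fin N) := (WithLp.equiv _ _).symm c with hx
  have h1 : ∑ i, ∑ j, c i * M i j * c j = ⟪x, Matrix.toEuclideanCLM (𝕜 := ℝ) M x⟫ := by
    rw [hx, WithLp.equiv_symm_apply, Matrix.toEuclideanCLM_toLp]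
    simp [EuclideanSpace.inner_eq_star_dotProduct, dotProduct, Matrix.mulVec,
      dotProduct, Finset.mul_sum, mul_comm, mul_assoc, mul_left_comm]
  have h2 : ⟪x, Matrix.toEuclideanCLM (𝕜 := ℝ) M x⟫ ≤ ‖x‖ * ‖Matrix.toEuclideanCLM (𝕜 := ℝ) M x‖ :=
    real_inner_le_norm _ _
  have h3 : ‖Matrix.toEuclideanCLM (𝕜 := ℝ) M x‖ ≤ ‖Matrix.toEuclideanCLM (𝕜 := ℝ) M‖ * ‖x‖ :=
    (Matrix.toEuclideanCLM (𝕜 := ℝ) M).le_opNorm x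
  have h4 : ‖x‖ ^ 2 = ∑ i, c i ^ 2 := by
    rw [hx]
    simp [EuclideanSpace.norm_eq, Real.sq_sqrt (Finset.sum_nonneg fun i _ => sq_nonneg _)]
  nlinarith [norm_nonneg x, norm_nonneg (Matrix.toEuclideanCLM (𝕜 := ℝ) M)]

lemma gram_sum_sq {H : Type*} [NormedAddCommGroup H] [InnerProductSpace ℝ H]
    {N : ℕ} (v : Fin N → H) (c : Fin N → ℝ) :
    ‖∑ j, c j • v j‖ ^ 2 = ∑ i, ∑ j, c i * ⟪v i, v j⟫ * c j := by
  rw [← real_inner_self_eq_norm_sq, sum_inner]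
  congr 1; ext i
  rw [inner_sum]
  congr 1; ext j
  rw [real_inner_smul_left, real_inner_smul_right]; ring

theorem stmt_2 {H : Type*} [NormedAddCommGroup H] [InnerProductSpace ℝ H]
    [CompleteSpace H]
    (N : ℕ) (hN : 0 < N) (g : H) (α : ℝ) (hα : 0 ≤ α)
    (ψ φ : Fin N → H)
    (KΨ KΦ : Matrix (Fin N) (Fin N) ℝ)
    (hKΨ : ∀ i j, KΨ i j = ⟪ψ i, ψ j⟫)
    (hKΦ : ∀ i j, KΦ i j = ⟪φ i, φ j⟫)
    (hnorm : α ^ 2 * ‖Matrix.toEuclideanCLM (𝕜 := ℝ) KΨ‖ *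
      ‖Matrix.toEuclideanCLM (𝕜 := ℝ) KΦ‖ ≤ 1)
    (T : H → H) (hT : ∀ Q, T Q = g + α • ∑ j, ⟪Q, φ j⟫ • ψ j) :
    ∀ Q Q', ‖T Q - T Q'‖ ≤ ‖Q - Q'‖ := by
  intro Q Q'
  set R := Q - Q' with hR
  set c : Fin N → ℝ := fun j => ⟪R, φ j⟫ with hc
  have hdiff : T Q - T Q' = α • ∑ j, c j • ψ j := by
    rw [hT, hT]
    rw [add_sub_add_left_eq_sub, ← smul_sub, ← Finset.sum_sub_distrib]
    congr 1
    apply Finset.sum_congr rfl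
    intro j _
    rw [← sub_smul]
    congr 1
    simp only [hc, hR, inner_sub_left]
  -- bound on c
  have hNΦ := norm_nonneg (Matrix.toEuclideanCLM (𝕜 := ℝ) KΦ)
  have hNΨ := norm_nonneg (Matrix.toEuclideanCLM (𝕜 := ℝ) KΨ)
  have hcsum : (0:ℝ) ≤ ∑ i, c i ^ 2 := Finset.sum_nonneg fun i _ => sq_nonneg _
  have hSφ : ‖∑ j, c j • φ j‖ ^ 2 ≤ ‖Matrix.toEuclideanCLM (𝕜 := ℝ) KΦ‖ * ∑ i, c i ^ 2 := by
    rw [gram_sum_sq]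
    have := quad_le_norm_mul KΦ c
    calc ∑ i, ∑ j, c i * ⟪φ i, φ j⟫ * c j = ∑ i, ∑ j, c i * KΦ i j * c j := by
          simp [hKΦ]
      _ ≤ _ := this
  have hRS : ∑ i, c i ^ 2 = ⟪R, ∑ j, c j • φ j⟫ := by
    rw [inner_sum]
    congr 1; ext j
    rw [real_inner_smul_right]; rw [hc]; ring
  have hc_le : ∑ i, c i ^ 2 ≤ ‖Matrix.toEuclideanCLM (𝕜 := ℝ) KΦ‖ * ‖R‖ ^ 2 := by
    have h1 : ∑ i, c i ^ 2 ≤ ‖R‖ * ‖∑ j, c j • φ j‖ := hRS ▸ real_inner_le_norm _ _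
    rcases hcsum.eq_or_lt with h0 | h0
    · rw [← h0]; positivity
    · nlinarith [mul_self_le_mul_self hcsum h1,
        mul_le_mul_of_nonneg_left hSφ (sq_nonneg ‖R‖), norm_nonneg R]
  have hSψ : ‖∑ j, c j • ψ j‖ ^ 2 ≤ ‖Matrix.toEuclideanCLM (𝕜 := ℝ) KΨ‖ * ∑ i, c i ^ 2 := by
    rw [gram_sum_sq]
    calc ∑ i, ∑ j, c i * ⟪ψ i, ψ j⟫ * c j = ∑ i, ∑ j, c i * KΨ i j * c j := by
          simp [hKΨ]
      _ ≤ _ := quad_le_norm_mul KΨ c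
  have hfinal : ‖T Q - T Q'‖ ^ 2 ≤ ‖R‖ ^ 2 := by
    rw [hdiff, norm_smul, Real.norm_eq_abs, abs_of_nonneg hα, mul_pow]
    nlinarith [norm_nonneg (∑ j, c j • ψ j), sq_nonneg α, mul_le_mul_of_nonneg_left hc_le hNΨ,
      mul_le_mul_of_nonneg_left hSψ (sq_nonneg α)]
  nlinarith [norm_nonneg (T Q - T Q'), norm_nonneg R]
end

section
/- Let A and B be real N×N positive semidefinite symmetric matrices and let P : H → H be defined on a Hilbert space by P Q = Σⱼ ⟨Q, φⱼ⟩ ψⱼ, where (ψⱼ) has Gram matrix K_Ψ and (φⱼ) has Gram matrix K_Φ. Then the operator norm of P satisfies ‖P‖ ≤ √(‖K_Ψ‖ · ‖K_Φ‖), where matrix norms are spectral norms. -/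
/-!
`P` factors as `S_ψ ∘ S_φ*`, where `S_v c = ∑ cᵢ vᵢ` is the synthesis operator of the family `v`
and `S_v* Q = (⟪vᵢ, Q⟫)ᵢ` is its analysis operator. Since `‖S_v c‖² = ⟪c, K_v c⟫`, the synthesis
operator has norm at most `√‖K_v‖`, and the analysis operator, being adjoint to it, has norm at
most `‖S_v‖`.
-/

open RealInnerProductSpace

namespace InnerProductSpace

open scoped InnerProductSpace

variable {𝕜 H ι : Type*} [RCLike 𝕜] [NormedAddCommGroup H] [InnerProductSpace 𝕜 H] [Fintype ι]

variable (𝕜) in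
noncomputable def synthesis (v : ι → H) : EuclideanSpace 𝕜 ι →L[𝕜] H :=
  LinearMap.toContinuousLinearMap
    (Fintype.linearCombination 𝕜 v ∘ₗ (WithLp.linearEquiv 2 𝕜 (ι → 𝕜)).toLinearMap)

theorem synthesis_apply (v : ι → H) (c : EuclideanSpace 𝕜 ι) :
    synthesis 𝕜 v c = ∑ i, c i • v i := by
  simp [synthesis, Fintype.linearCombination_apply]

theorem inner_synthesis_synthesis [DecidableEq ι] (v : ι → H) (c d : EuclideanSpace 𝕜 ι) :
    ⟪synthesis 𝕜 v c, synthesis 𝕜 v d⟫_𝕜 =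
      ⟪c, Matrix.toEuclideanCLM (𝕜 := 𝕜) (Matrix.gram 𝕜 v) d⟫_𝕜 := by
  simp only [synthesis_apply, sum_inner, inner_sum, inner_smul_left, inner_smul_right,
    PiLp.inner_apply, Matrix.ofLp_toEuclideanCLM, Matrix.mulVec, dotProduct, Finset.mul_sum,
    Matrix.gram_apply, RCLike.inner_apply, Finset.sum_mul]
  rw [Finset.sum_comm]
  exact Finset.sum_congr rfl fun i _ => Finset.sum_congr rfl fun j _ => by ring

theorem norm_synthesis_le [DecidableEq ι] (v : ι → H) :
    ‖synthesis 𝕜 v‖ ≤ √‖Matrix.toEuclideanCLM (𝕜 := 𝕜) (Matrix.gram 𝕜 v)‖ := by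
  set G := Matrix.toEuclideanCLM (𝕜 := 𝕜) (Matrix.gram 𝕜 v)
  refine (synthesis 𝕜 v).opNorm_le_bound (Real.sqrt_nonneg _) fun c => ?_
  have hsq : ‖synthesis 𝕜 v c‖ * ‖synthesis 𝕜 v c‖ ≤ (√‖G‖ * ‖c‖) * (√‖G‖ * ‖c‖) :=
    calc ‖synthesis 𝕜 v c‖ * ‖synthesis 𝕜 v c‖ = RCLike.re ⟪c, G c⟫_𝕜 := by
          rw [← inner_synthesis_synthesis, inner_self_eq_norm_mul_norm]
      _ ≤ ‖c‖ * ‖G c‖ := re_inner_le_norm _ _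
      _ ≤ ‖c‖ * (‖G‖ * ‖c‖) := by gcongr; exact G.le_opNorm c
      _ = (√‖G‖ * ‖c‖) * (√‖G‖ * ‖c‖) := by
          rw [mul_mul_mul_comm, Real.mul_self_sqrt (norm_nonneg G)]; ring
  exact (mul_self_le_mul_self_iff (norm_nonneg _) (by positivity)).2 hsq

theorem norm_analysis_le (v : ι → H) (x : H) :
    ‖(WithLp.toLp 2 fun i => ⟪v i, x⟫_𝕜 : EuclideanSpace 𝕜 ι)‖ ≤ ‖synthesis 𝕜 v‖ * ‖x‖ := by
  set a : EuclideanSpace 𝕜 ι := WithLp.toLp 2 fun i => ⟪v i, x⟫_𝕜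
  have ha : ⟪a, a⟫_𝕜 = ⟪synthesis 𝕜 v a, x⟫_𝕜 := by
    simp only [a, synthesis_apply, sum_inner, inner_smul_left, PiLp.inner_apply,
      RCLike.inner_apply]
    exact Finset.sum_congr rfl fun i _ => mul_comm _ _
  rcases (norm_nonneg a).eq_or_lt with h0 | hpos
  · rw [← h0]
    positivity
  refine le_of_mul_le_mul_right ?_ hpos
  calc ‖a‖ * ‖a‖ = RCLike.re ⟪synthesis 𝕜 v a, x⟫_𝕜 := by rw [← ha, inner_self_eq_norm_mul_norm]
    _ ≤ ‖synthesis 𝕜 v a‖ * ‖x‖ := re_inner_le_norm _ _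
    _ ≤ ‖synthesis 𝕜 v‖ * ‖a‖ * ‖x‖ := by gcongr; exact (synthesis 𝕜 v).le_opNorm a
    _ = ‖synthesis 𝕜 v‖ * ‖x‖ * ‖a‖ := by ring

end InnerProductSpace

open InnerProductSpace

theorem stmt_17_general {H : Type*} [NormedAddCommGroup H] [InnerProductSpace ℝ H]
    (N : ℕ) (ψ φ : Fin N → H)
    (KΨ KΦ : Matrix (Fin N) (Fin N) ℝ)
    (hKΨ : ∀ i j, KΨ i j = ⟪ψ i, ψ j⟫)
    (hKΦ : ∀ i j, KΦ i j = ⟪φ i, φ j⟫)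
    (P : H →L[ℝ] H) (hP : ∀ Q, P Q = ∑ j, ⟪Q, φ j⟫ • ψ j) :
    ‖P‖ ≤ Real.sqrt (‖Matrix.toEuclideanCLM (𝕜 := ℝ) KΨ‖ *
      ‖Matrix.toEuclideanCLM (𝕜 := ℝ) KΦ‖) := by
  obtain rfl : KΨ = Matrix.gram ℝ ψ := Matrix.ext hKΨ
  obtain rfl : KΦ = Matrix.gram ℝ φ := Matrix.ext hKΦ
  refine P.opNorm_le_bound (Real.sqrt_nonneg _) fun Q => ?_
  have hPQ : P Q = synthesis ℝ ψ (WithLp.toLp 2 fun j => ⟪φ j, Q⟫) := by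
    simp only [hP, synthesis_apply, real_inner_comm]
  calc ‖P Q‖ ≤ ‖synthesis ℝ ψ‖ * (‖synthesis ℝ φ‖ * ‖Q‖) := by
        rw [hPQ]
        exact (ContinuousLinearMap.le_opNorm _ _).trans (by gcongr; exact norm_analysis_le φ Q)
    _ ≤ √‖Matrix.toEuclideanCLM (𝕜 := ℝ) (Matrix.gram ℝ ψ)‖ *
          (√‖Matrix.toEuclideanCLM (𝕜 := ℝ) (Matrix.gram ℝ φ)‖ * ‖Q‖) := by
        gcongr <;> exact norm_synthesis_le _
    _ = _ := by rw [Real.sqrt_mul (norm_nonneg _), mul_assoc]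

theorem stmt_17 {H : Type*} [NormedAddCommGroup H] [InnerProductSpace ℝ H]
    [CompleteSpace H] (N : ℕ) (hN : 0 < N) (ψ φ : Fin N → H)
    (KΨ KΦ : Matrix (Fin N) (Fin N) ℝ)
    (hKΨ : ∀ i j, KΨ i j = ⟪ψ i, ψ j⟫)
    (hKΦ : ∀ i j, KΦ i j = ⟪φ i, φ j⟫)
    (P : H →L[ℝ] H) (hP : ∀ Q, P Q = ∑ j, ⟪Q, φ j⟫ • ψ j) :
    ‖P‖ ≤ Real.sqrt (‖Matrix.toEuclideanCLM (𝕜 := ℝ) KΨ‖ *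
      ‖Matrix.toEuclideanCLM (𝕜 := ℝ) KΦ‖) :=
  stmt_17_general N ψ φ KΨ KΦ hKΨ hKΦ P hP
end
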